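/- For every sufficiently large integer k there exist probability distributions D_0 and D_1 on {0,1}^k such that Pr_{x ~ D_0}[every coordinate of x is 0] ≥ 1 − 2/√k, Pr_{x ~ D_1}[every coordinate of x is 0] ≤ 1/√k, and D_0 and D_1 have matching moments up to degree 4, i.e., for all i, j, m, n ∈ [k]: E_{D_0}[x_i] = E_{D_1}[x_i], E_{D_0}[x_i x_j] = E_{D_1}[x_i x_j], E_{D_0}[x_i x_j x_m] = E_{D_1}[x_i x_j x_m], and E_{D_0}[x_i x_j x_m x_n] = E_{D_1}[x_i x_j x_m x_n]. -/

import Mathlib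

/-!
If the parameter `p` is drawn from a distribution `λ` on `[0, 1]` and then the `k` bits are
i.i.d. Bernoulli(`p`), the moment of a multiset `S` of coordinates is `E_λ[p ^ #(supp S)]`,
because a product of bits only sees which coordinates occur. It therefore suffices to find two
distributions on `[0, 1]` with equal moments of degree at most 4, one nearly a point mass at `0`
and the other supported in `[a/4, 1]`. Divided differences supply them: the fifth divided
difference of `t ^ d` at the six nodes `0, a, 1, 2, 3, 4` vanishes for `d ≤ 4`, and its weights
alternate in sign, so `{0, 1, 3}` and `{a, 2, 4}` carry two positive measures with equal first
four moments; the mass away from `0` on the first side is `O(a)`. Scaling the nodes by `1/4` and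
taking `a = 1/(8√k)`, the first mixture gives the all-zero string probability at least
`1 - 2/√k`, while the second gives it at most `(1 - a/4)^k ≤ exp(-√k/32) ≤ 1/√k`.
-/

open MeasureTheory
open scoped ENNReal

noncomputable section

def bval (b : Bool) : ℝ := if b then 1 else 0

open Finset ProbabilityTheory
open scoped unitInterval NNReal

lemma bval_pow (b : Bool) {n : ℕ} (hn : n ≠ 0) : bval b ^ n = bval b := by
  cases b <;> simp [bval, hn]

lemma prod_map_bval_eq_prod_toFinset {ι : Type*} [DecidableEq ι] (x : ι → Bool)
    (S : Multiset ι) :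
    (S.map fun i => bval (x i)).prod = ∏ i ∈ S.toFinset, bval (x i) := by
  rw [Finset.prod_multiset_map_count]
  exact Finset.prod_congr rfl fun i hi =>
    bval_pow _ (Multiset.count_ne_zero.2 (Multiset.mem_toFinset.1 hi))

lemma integral_prod_bval_pi_bernoulliMeasure {ι : Type*} [Fintype ι] [DecidableEq ι] (p : I)
    (s : Finset ι) :
    ∫ x, ∏ i ∈ s, bval (x i) ∂(Measure.pi fun _ : ι => Ber(true, false, p)) = p ^ #s := by
  simp_rw [← Finset.prod_ite_mem_eq s]
  rw [integral_fintype_prod_eq_prod (fun i b => if i ∈ s then bval b else 1)]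
  simp [integral_bernoulliMeasure, bval, apply_ite]

def bernoulliMixture (ι : Type*) [Fintype ι] {κ : Type*} [Fintype κ] (w : κ → ℝ≥0)
    (p : κ → I) : Measure (ι → Bool) :=
  ∑ j, w j • Measure.pi fun _ : ι => Ber(true, false, p j)

section BernoulliMixture

variable {ι κ : Type*} [Fintype ι] [Fintype κ] {w : κ → ℝ≥0} {p : κ → I}

lemma isProbabilityMeasure_bernoulliMixture (hw : ∑ j, w j = 1) :
    IsProbabilityMeasure (bernoulliMixture ι w p) := by
  constructor
  simp [bernoulliMixture, ← ENNReal.ofNNReal_finsetSum, hw]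

lemma bernoulliMixture_allFalse :
    (bernoulliMixture ι w p {x | ∀ i, x i = false}).toReal =
      ∑ j, (w j : ℝ) * (1 - p j) ^ Fintype.card ι := by
  have hpi : {x : ι → Bool | ∀ i, x i = false} = Set.univ.pi fun _ => {false} := by
    ext; simp
  simp only [bernoulliMixture, hpi, Measure.coe_finsetSum, Finset.sum_apply, Measure.smul_apply,
    Measure.pi_pi, Finset.prod_const, Finset.card_univ]
  simp [ENNReal.smul_def, ← ENNReal.coe_pow, ← ENNReal.coe_mul, ← ENNReal.ofNNReal_finsetSum]

lemma le_bernoulliMixture_allFalse (j : κ) :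
    (w j : ℝ) * (1 - p j) ^ Fintype.card ι ≤
      (bernoulliMixture ι w p {x | ∀ i, x i = false}).toReal := by
  rw [bernoulliMixture_allFalse]
  exact Finset.single_le_sum
    (fun i _ => mul_nonneg (w i).2 (pow_nonneg (unitInterval.one_minus_nonneg _) _))
    (Finset.mem_univ j)

lemma bernoulliMixture_allFalse_le (hw : ∑ j, w j = 1) {q : ℝ} (hq : ∀ j, q ≤ p j) :
    (bernoulliMixture ι w p {x | ∀ i, x i = false}).toReal ≤ (1 - q) ^ Fintype.card ι := by
  rw [bernoulliMixture_allFalse]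
  calc ∑ j, (w j : ℝ) * (1 - p j) ^ Fintype.card ι
      ≤ ∑ j, (w j : ℝ) * (1 - q) ^ Fintype.card ι := by
        gcongr with j
        · exact unitInterval.one_minus_nonneg _
        · exact hq j
    _ = (1 - q) ^ Fintype.card ι := by
        rw [← Finset.sum_mul, ← NNReal.coe_sum, hw, NNReal.coe_one, one_mul]

lemma integral_prod_bval_bernoulliMixture [DecidableEq ι] (s : Finset ι) :
    ∫ x, ∏ i ∈ s, bval (x i) ∂bernoulliMixture ι w p = ∑ j, (w j : ℝ) * p j ^ #s := by
  rw [bernoulliMixture, integral_finsetSum_measure fun _ _ => Integrable.of_finite]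
  simp [integral_smul_nnreal_measure, integral_prod_bval_pi_bernoulliMeasure, NNReal.smul_def]

end BernoulliMixture

def evenNodes : Fin 3 → ℝ := ![0, 1, 3]

def oddNodes (a : ℝ) : Fin 3 → ℝ := ![a, 2, 4]

/- The weight of a node `t` is `1 / |∏ (t - u)|` over the other five of the six nodes
`0, a, 1, 2, 3, 4`. -/
def evenWeights (a : ℝ) : Fin 3 → ℝ := ![(24 * a)⁻¹, (6 * (1 - a))⁻¹, (6 * (3 - a))⁻¹]

def oddWeights (a : ℝ) : Fin 3 → ℝ :=
  ![(a * (1 - a) * (2 - a) * (3 - a) * (4 - a))⁻¹, (4 * (2 - a))⁻¹, (24 * (4 - a))⁻¹]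

lemma sum_evenWeights_mul_pow {a : ℝ} (ha : a ∉ ({0, 1, 2, 3, 4} : Set ℝ)) {d : ℕ}
    (hd : d ≤ 4) :
    ∑ j, evenWeights a j * evenNodes j ^ d = ∑ j, oddWeights a j * oddNodes a j ^ d := by
  simp only [Set.mem_insert_iff, Set.mem_singleton_iff, not_or] at ha
  obtain ⟨h0, h1, h2, h3, h4⟩ := ha
  have h1' : 1 - a ≠ 0 := sub_ne_zero.2 (Ne.symm h1)
  have h2' : 2 - a ≠ 0 := sub_ne_zero.2 (Ne.symm h2)
  have h3' : 3 - a ≠ 0 := sub_ne_zero.2 (Ne.symm h3)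
  have h4' : 4 - a ≠ 0 := sub_ne_zero.2 (Ne.symm h4)
  simp only [Fin.sum_univ_three, evenWeights, evenNodes, oddWeights, oddNodes,
    Matrix.cons_val_zero, Matrix.cons_val_one, Matrix.cons_val_two, Matrix.head_cons,
    Matrix.tail_cons]
  interval_cases d <;> (field_simp; ring)

section Weights

variable {a : ℝ} (ha0 : 0 < a) (ha1 : a < 1)
include ha0 ha1

lemma evenWeights_pos (j : Fin 3) : 0 < evenWeights a j := by
  fin_cases j <;> simp only [evenWeights, Fin.zero_eta, Fin.mk_one, Fin.reduceFinMk,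
    Matrix.cons_val] <;> apply inv_pos.2 <;> linarith

lemma oddWeights_pos (j : Fin 3) : 0 < oddWeights a j := by
  have : 0 < a * (1 - a) * (2 - a) * (3 - a) * (4 - a) := by
    apply_rules [mul_pos] <;> linarith
  fin_cases j <;> simp only [oddWeights, Fin.zero_eta, Fin.mk_one, Fin.reduceFinMk,
    Matrix.cons_val] <;> apply inv_pos.2 <;> linarith

lemma evenWeights_one_add_two_le :
    evenWeights a 1 + evenWeights a 2 ≤ 8 * a / (1 - a) * evenWeights a 0 := by
  simp only [evenWeights, Matrix.cons_val_zero, Matrix.cons_val_one, Matrix.cons_val_two,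
    Matrix.head_cons, Matrix.tail_cons]
  have h1 : 0 < 6 * (1 - a) := by linarith
  have h3 : (6 * (3 - a))⁻¹ ≤ (6 * (1 - a))⁻¹ := inv_anti₀ h1 (by linarith)
  calc _ ≤ 2 * (6 * (1 - a))⁻¹ := by linarith
    _ = _ := by field_simp; ring

end Weights

lemma exists_four_moments_eq {a : ℝ} (ha0 : 0 < a) (ha1 : a < 1) :
    ∃ (w₀ w₁ : Fin 3 → ℝ≥0) (p₀ p₁ : Fin 3 → I),
      ∑ j, w₀ j = 1 ∧ ∑ j, w₁ j = 1 ∧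
      (∀ d ≤ 4, ∑ j, (w₀ j : ℝ) * p₀ j ^ d = ∑ j, (w₁ j : ℝ) * p₁ j ^ d) ∧
      p₀ 0 = 0 ∧ 1 - 8 * a / (1 - a) ≤ w₀ 0 ∧ ∀ j, a / 4 ≤ p₁ j := by
  have hmom {d : ℕ} (hd : d ≤ 4) :=
    sum_evenWeights_mul_pow (a := a) (by
      simp only [Set.mem_insert_iff, Set.mem_singleton_iff]
      rintro (h | h | h | h | h) <;> linarith) hd
  set T := ∑ j, evenWeights a j
  have hT : 0 < T := sum_pos (fun j _ => evenWeights_pos ha0 ha1 j) univ_nonempty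
  have hT' : ∑ j, oddWeights a j = T := by simpa using (hmom (d := 0) (by norm_num)).symm
  let w₀ (j : Fin 3) : ℝ≥0 := ⟨evenWeights a j / T, (div_pos (evenWeights_pos ha0 ha1 j) hT).le⟩
  let w₁ (j : Fin 3) : ℝ≥0 := ⟨oddWeights a j / T, (div_pos (oddWeights_pos ha0 ha1 j) hT).le⟩
  have hw₀ (j : Fin 3) : (w₀ j : ℝ) = evenWeights a j / T := rfl
  have hw₁ (j : Fin 3) : (w₁ j : ℝ) = oddWeights a j / T := rfl
  have hp₀ (j : Fin 3) : evenNodes j / 4 ∈ I := by fin_cases j <;> norm_num [evenNodes]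
  have hp₁ (j : Fin 3) : oddNodes a j / 4 ∈ I := by
    fin_cases j <;> norm_num [oddNodes]
    constructor <;> linarith
  refine ⟨w₀, w₁, fun j => ⟨_, hp₀ j⟩, fun j => ⟨_, hp₁ j⟩, ?_, ?_, fun d hd => ?_, ?_, ?_, ?_⟩
  · rw [← NNReal.coe_inj, NNReal.coe_sum]
    simp only [hw₀, ← sum_div, NNReal.coe_one]
    exact div_self hT.ne'
  · rw [← NNReal.coe_inj, NNReal.coe_sum]
    simp only [hw₁, ← sum_div, hT', NNReal.coe_one]
    exact div_self hT.ne'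
  · simp [hw₀, hw₁, div_pow, div_mul_div_comm, ← Finset.sum_div, hmom hd]
  · ext; simp [evenNodes]
  · have htail := evenWeights_one_add_two_le ha0 ha1
    have hc : 0 ≤ 8 * a / (1 - a) := div_nonneg (by linarith) (by linarith)
    have hT₃ : T = evenWeights a 0 + evenWeights a 1 + evenWeights a 2 := Fin.sum_univ_three _
    have hcT := mul_nonneg hc (add_pos (evenWeights_pos ha0 ha1 1) (evenWeights_pos ha0 ha1 2)).le
    rw [hw₀, le_div_iff₀ hT]
    nlinarith
  · intro j
    fin_cases j <;>
      simp only [oddNodes, Fin.zero_eta, Fin.mk_one, Fin.reduceFinMk, Matrix.cons_val] <;> linarith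

lemma one_sub_pow_le_inv_sqrt {k : ℕ} (hk : 2048 ^ 2 ≤ k) :
    (1 - 1 / (32 * √k)) ^ k ≤ 1 / √k := by
  have hs : 2048 ≤ √k := Real.le_sqrt_of_sq_le (by exact_mod_cast hk)
  have hsk : √k ^ 2 = k := Real.sq_sqrt (Nat.cast_nonneg k)
  have hexp : √k ≤ Real.exp (√k / 32) := by
    nlinarith [Real.quadratic_le_exp_of_nonneg (show 0 ≤ √k / 32 by positivity)]
  calc (1 - 1 / (32 * √k)) ^ k ≤ Real.exp (-(1 / (32 * √k))) ^ k :=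
        pow_le_pow_left₀ (by rw [sub_nonneg, div_le_one (by positivity)]; linarith)
          (Real.one_sub_le_exp_neg _) k
    _ = (Real.exp (√k / 32))⁻¹ := by
        rw [← Real.exp_nat_mul, ← Real.exp_neg]
        congr 1
        field_simp
        rw [hsk]
    _ ≤ 1 / √k := by
        rw [one_div]
        exact inv_anti₀ (by positivity) hexp

theorem stmt_6 :
    ∃ k₀ : ℕ, ∀ k : ℕ, k₀ ≤ k →
      ∃ D₀ D₁ : Measure (Fin k → Bool),
        IsProbabilityMeasure D₀ ∧ IsProbabilityMeasure D₁ ∧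
        1 - 2 / Real.sqrt k ≤ (D₀ {x | ∀ i, x i = false}).toReal ∧
        (D₁ {x | ∀ i, x i = false}).toReal ≤ 1 / Real.sqrt k ∧
        ∀ S : Multiset (Fin k), Multiset.card S ≤ 4 →
          ∫ x, (S.map fun i => bval (x i)).prod ∂D₀ =
            ∫ x, (S.map fun i => bval (x i)).prod ∂D₁ := by
  refine ⟨2048 ^ 2, fun k hk => ?_⟩
  have hs : 2048 ≤ √k := Real.le_sqrt_of_sq_le (by exact_mod_cast hk)
  set a := 1 / (8 * √k) with ha
  have ha0 : 0 < a := by positivity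
  have ha1 : a ≤ 1 / 2 := by rw [ha, div_le_div_iff₀ (by positivity) two_pos]; linarith
  obtain ⟨w₀, w₁, p₀, p₁, hw₀, hw₁, hmom, hp₀, hw₀0, hp₁⟩ :=
    exists_four_moments_eq ha0 (by linarith)
  refine ⟨bernoulliMixture (Fin k) w₀ p₀, bernoulliMixture (Fin k) w₁ p₁,
    isProbabilityMeasure_bernoulliMixture hw₀, isProbabilityMeasure_bernoulliMixture hw₁,
    ?_, ?_, fun S hS => ?_⟩
  · calc 1 - 2 / √k ≤ 1 - 8 * a / (1 - a) := by
          rw [sub_le_sub_iff_left, div_le_div_iff₀ (by linarith) (by positivity), ha]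
          field_simp
          linarith
      _ ≤ w₀ 0 * (1 - p₀ 0) ^ Fintype.card (Fin k) := by simpa [hp₀] using hw₀0
      _ ≤ _ := le_bernoulliMixture_allFalse 0
  · calc _ ≤ (1 - a / 4) ^ Fintype.card (Fin k) := bernoulliMixture_allFalse_le hw₁ hp₁
      _ = (1 - 1 / (32 * √k)) ^ k := by rw [Fintype.card_fin, ha]; ring_nf
      _ ≤ 1 / √k := one_sub_pow_le_inv_sqrt hk
  · simp_rw [prod_map_bval_eq_prod_toFinset, integral_prod_bval_bernoulliMixture]
    exact hmom _ ((Multiset.toFinset_card_le S).trans hS)
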